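/- The derivatives of inverf at 0 are given in terms of the polynomials Pₙ by dₙ = (1/√2)·(√(π/2))ⁿ·P_{n-1}(0) for n ≥ 1. -/

import Mathlib

open Real Set Polynomial

noncomputable def erf (z : ℝ) : ℝ := (2 / Real.sqrt π) * ∫ t in (0:ℝ)..z, Real.exp (-t^2)

private noncomputable def Gp : ℕ → Polynomial ℝ
  | 0 => 1
  | (n+1) => Polynomial.derivative (Gp n) + Polynomial.C (2*((n:ℝ)+1)) * Polynomial.X * Gp n

private lemma erf_zero : erf 0 = 0 := by simp [erf]

private lemma hasStrictDerivAt_erf (x : ℝ) :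
    HasStrictDerivAt erf (2 / Real.sqrt π * Real.exp (-x^2)) x := by
  have hc : Continuous fun t : ℝ => Real.exp (-t^2) := by continuity
  exact (hc.integral_hasStrictDerivAt 0 x).const_mul _

private lemma erf_deriv_ne (x : ℝ) : 2 / Real.sqrt π * Real.exp (-x^2) ≠ 0 := by
  have : (0:ℝ) < Real.sqrt π := Real.sqrt_pos.2 Real.pi_pos
  positivity

private lemma isOpen_range_erf : IsOpen (Set.range erf) := by
  rw [isOpen_iff_mem_nhds]
  rintro z ⟨x, rfl⟩
  rw [← (hasStrictDerivAt_erf x).map_nhds_eq (erf_deriv_ne x), Filter.mem_map]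
  exact Filter.mem_of_superset Filter.univ_mem fun y _ => Set.mem_range_self y

private lemma hasDerivAt_I {I : ℝ → ℝ} (hright : ∀ x : ℝ, I (erf x) = x)
    {y : ℝ} (hy : y ∈ Set.range erf) :
    HasDerivAt I (Real.sqrt π / 2 * Real.exp ((I y)^2)) y := by
  obtain ⟨x, rfl⟩ := hy
  have h := ((hasStrictDerivAt_erf x).to_local_left_inverse
    (erf_deriv_ne x) (Filter.Eventually.of_forall hright)).hasDerivAt
  have hinv : (2 / Real.sqrt π * Real.exp (-x^2))⁻¹
      = Real.sqrt π / 2 * Real.exp ((I (erf x))^2) := by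
    rw [hright x, mul_inv, ← Real.exp_neg, neg_neg]
    congr 1
    rw [inv_div]
  rw [← hinv]
  exact h

private lemma iteratedDeriv_I {I : ℝ → ℝ} (hright : ∀ x : ℝ, I (erf x) = x) (n : ℕ) :
    ∀ y ∈ Set.range erf, iteratedDeriv (n+1) I y
      = (Real.sqrt π / 2)^(n+1) * Real.exp (((n:ℝ)+1) * (I y)^2) * (Gp n).eval (I y) := by
  induction n with
  | zero =>
    intro y hy
    rw [iteratedDeriv_one, (hasDerivAt_I hright hy).deriv]
    simp [Gp]
  | succ n ih =>
    intro y hy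
    rw [iteratedDeriv_succ]
    have heq : iteratedDeriv (n+1) I =ᶠ[nhds y]
        fun z => (Real.sqrt π / 2)^(n+1) * Real.exp (((n:ℝ)+1) * (I z)^2) * (Gp n).eval (I z) :=
      Filter.eventuallyEq_of_mem (isOpen_range_erf.mem_nhds hy) ih
    rw [heq.deriv_eq]
    set c := Real.sqrt π / 2 with hc
    have hI := hasDerivAt_I hright hy
    set u := I y with hu
    set d := c * Real.exp (u^2) with hd
    have h1 : HasDerivAt (fun z => (I z)^2) (2 * u * d) y := by
      have := hI.fun_pow 2
      simpa [hu] using this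
    have h2 : HasDerivAt (fun z => Real.exp (((n:ℝ)+1) * (I z)^2))
        (Real.exp (((n:ℝ)+1) * u^2) * (((n:ℝ)+1) * (2 * u * d))) y :=
      (h1.const_mul ((n:ℝ)+1)).exp
    have h3 : HasDerivAt (fun z => (Gp n).eval (I z))
        ((Polynomial.derivative (Gp n)).eval u * d) y :=
      (Polynomial.hasDerivAt (Gp n) u).comp y hI
    have h4 := ((h2.fun_mul h3).const_mul (c^(n+1))).deriv
    simp only [mul_assoc]
    rw [h4]
    have hGe : (Gp (n+1)).eval u
        = (Polynomial.derivative (Gp n)).eval u + 2*((n:ℝ)+1) * u * (Gp n).eval u := by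
      simp [Gp]
    rw [hGe]
    push_cast
    rw [show ((n:ℝ)+1+1) * u^2 = ((n:ℝ)+1) * u^2 + u^2 by ring, Real.exp_add, hd]
    ring

private lemma P_eq_Gp {P : ℕ → Polynomial ℝ} (hP0 : P 0 = 1)
    (hP : ∀ n : ℕ, P (n+1) = Polynomial.derivative (P n) + Polynomial.C ((n:ℝ)+1) * Polynomial.X * P n) :
    ∀ n : ℕ, P n = Polynomial.C ((Real.sqrt 2)⁻¹ ^ n) * (Gp n).comp (Polynomial.C (Real.sqrt 2)⁻¹ * Polynomial.X) := by
  have h2 : Real.sqrt 2 ≠ 0 := by positivity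
  have hs : (2:ℝ) * ((Real.sqrt 2)⁻¹)^2 = 1 := by
    rw [inv_pow, Real.sq_sqrt (by norm_num : (0:ℝ) ≤ 2)]
    norm_num
  intro n
  induction n with
  | zero => simp [hP0, Gp]
  | succ n ih =>
    rw [hP n, ih, show Gp (n+1) = Polynomial.derivative (Gp n)
        + Polynomial.C (2*((n:ℝ)+1)) * Polynomial.X * Gp n from rfl]
    set s : ℝ := (Real.sqrt 2)⁻¹ with hsdef
    rw [Polynomial.derivative_C_mul, Polynomial.derivative_comp, Polynomial.add_comp,
      Polynomial.mul_comp, Polynomial.mul_comp, Polynomial.C_comp, Polynomial.X_comp]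
    have hd : Polynomial.derivative (Polynomial.C s * Polynomial.X) = Polynomial.C s := by
      simp
    rw [hd]
    have hCs : (Polynomial.C s)^2 * Polynomial.C (2:ℝ) = 1 := by
      rw [← Polynomial.C_pow, ← Polynomial.C_mul, ← Polynomial.C_1]
      congr 1
      rw [mul_comm]; exact hs
    have hpow : Polynomial.C (s ^ (n+1)) = Polynomial.C (s^n) * Polynomial.C s := by
      rw [← Polynomial.C_mul, pow_succ]
    rw [hpow, show Polynomial.C (2*((n:ℝ)+1)) = Polynomial.C (2:ℝ) * Polynomial.C ((n:ℝ)+1) from by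
      rw [← Polynomial.C_mul]]
    linear_combination (Polynomial.C ((n:ℝ)+1) * Polynomial.X * Polynomial.C (s^n)
      * (Gp n).comp (Polynomial.C s * Polynomial.X)) * (-1) * hCs

theorem inverf_derivs_via_P (I : ℝ → ℝ)
    (hleft : ∀ z ∈ Ioo (-1:ℝ) 1, erf (I z) = z)
    (hright : ∀ x : ℝ, I (erf x) = x)
    (P : ℕ → Polynomial ℝ)
    (hP0 : P 0 = 1)
    (hP : ∀ n : ℕ, P (n+1) = Polynomial.derivative (P n) + Polynomial.C ((n:ℝ)+1) * Polynomial.X * P n) :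
    ∀ n : ℕ, 1 ≤ n →
      iteratedDeriv n I 0 = (1 / Real.sqrt 2) * (Real.sqrt (π/2))^n * (P (n-1)).eval 0 := by
  intro n hn
  obtain ⟨m, rfl⟩ : ∃ m, n = m + 1 := ⟨n - 1, (Nat.succ_pred_eq_of_pos hn).symm⟩
  have h0 : (0:ℝ) ∈ Set.range erf := ⟨0, erf_zero⟩
  have hI0 : I 0 = 0 := by
    have := hright 0
    rwa [erf_zero] at this
  have hval := iteratedDeriv_I hright m 0 h0
  rw [hI0] at hval
  have hPm : (P (m+1-1)).eval 0 = ((Real.sqrt 2)⁻¹)^m * (Gp m).eval 0 := by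
    rw [show m+1-1 = m from rfl, P_eq_Gp hP0 hP m]
    simp
  rw [hval, hPm]
  have h2 : (0:ℝ) < Real.sqrt 2 := Real.sqrt_pos.2 (by norm_num)
  have hπ : (0:ℝ) ≤ π := Real.pi_pos.le
  have hsq : Real.sqrt (π/2) = Real.sqrt π / Real.sqrt 2 := Real.sqrt_div hπ 2
  have h22 : Real.sqrt 2 * Real.sqrt 2 = 2 := Real.mul_self_sqrt (by norm_num)
  rw [hsq]
  norm_num
  rw [div_pow, div_pow]
  field_simp
  rw [show (2:ℝ)^(m+1) = (Real.sqrt 2 * Real.sqrt 2)^(m+1) by rw [h22], mul_pow]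
  ring_nf
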